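/- For the depolarizing map, the curve of states β(p) = √(1−3p/4)|00⟩ + √(p/4)|01⟩ + √(p/4)|10⟩ + √(p/4)|11⟩, for p ∈ [0,1], can be written as β(p) = e^{is}|a⟩ + e^{−is}|b⟩ with sin s = √(3p/4), where |a⟩ = (1/2)|00⟩ − (i/(2√3))(|01⟩ + |10⟩ + |11⟩) and |b⟩ = conj of |a⟩, which are orthogonal and satisfy ⟨a|a⟩ + ⟨b|b⟩ = 1. -/

import Mathlib

open Complex
open scoped ComplexInnerProductSpace

/-- The depolarizing ancilla curve `β(p)` in ℂ⁴ (basis `|00⟩,|01⟩,|10⟩,|11⟩`). -/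
noncomputable def betaDepol (p : ℝ) : EuclideanSpace ℂ (Fin 4) :=
  WithLp.toLp 2 ![(Real.sqrt (1 - 3 * p / 4) : ℂ), (Real.sqrt (p / 4) : ℂ),
    (Real.sqrt (p / 4) : ℂ), (Real.sqrt (p / 4) : ℂ)]

noncomputable def aDepol : EuclideanSpace ℂ (Fin 4) :=
  WithLp.toLp 2 ![(1 / 2 : ℂ), -(I / (2 * Real.sqrt 3)), -(I / (2 * Real.sqrt 3)),
    -(I / (2 * Real.sqrt 3))]

noncomputable def bDepol : EuclideanSpace ℂ (Fin 4) :=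
  WithLp.toLp 2 (fun i => starRingEnd ℂ (aDepol i))

/-! Since `b = conj a`, the `k`-th entry of `e^{is} a + e^{-is} b` is `2 Re (e^{is} a_k)`: this is
`cos s` for `a_0 = 1/2` and `sin s / √3` for `a_k = -i/(2√3)`, and the hypotheses turn these into
`√(1 - 3p/4)` and `√(p/4)`. Moreover `⟪a, conj a⟫ = conj (∑ a_k²) = conj (1/4 - 3/12) = 0` and
`‖b‖ = ‖a‖`, `‖a‖² = 1/4 + 3/12 = 1/2`. -/

open ComplexConjugate

section ConjugateVector

variable {ι : Type*} [Fintype ι]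

theorem norm_toLp_conj (v : EuclideanSpace ℂ ι) :
    ‖(WithLp.toLp 2 fun i => conj (v i) : EuclideanSpace ℂ ι)‖ = ‖v‖ := by
  simp [EuclideanSpace.norm_eq]

theorem inner_toLp_conj (v : EuclideanSpace ℂ ι) :
    ⟪v, (WithLp.toLp 2 fun i => conj (v i) : EuclideanSpace ℂ ι)⟫ = conj (∑ i, v i ^ 2) := by
  simp [PiLp.inner_apply, map_sum, sq]

end ConjugateVector

theorem exp_mul_add_exp_neg_mul_conj (s : ℝ) (w : ℂ) :
    exp (I * s) * w + exp (-(I * s)) * conj w = (2 * (exp (I * s) * w).re : ℝ) := by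
  have : exp (-(I * s)) = conj (exp (I * s)) := by rw [← exp_conj]; simp
  rw [this, ← map_mul, add_conj]

theorem re_exp_I_mul_mul (s : ℝ) (w : ℂ) :
    (exp (I * s) * w).re = Real.cos s * w.re - Real.sin s * w.im := by
  simp [mul_re, exp_re, exp_im]

theorem Real.cos_eq_sqrt_one_sub_of_sin_eq_sqrt {s x : ℝ}
    (hs : s ∈ Set.Icc (-(Real.pi / 2)) (Real.pi / 2)) (hx : 0 ≤ x) (h : Real.sin s = √x) :
    Real.cos s = √(1 - x) := by
  rw [Real.cos_eq_sqrt_one_sub_sin_sq hs.1 hs.2, h, Real.sq_sqrt hx]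

theorem sum_aDepol_sq : ∑ i, aDepol i ^ 2 = 0 := by
  have h3 : ((Real.sqrt 3 : ℝ) : ℂ) ^ 2 = 3 := by
    norm_cast; exact Real.sq_sqrt (by norm_num)
  simp only [aDepol, one_div, Fin.sum_univ_four, Fin.isValue, Matrix.cons_val_zero, inv_pow,
    Matrix.cons_val_one, even_two, Even.neg_pow, Matrix.cons_val]
  field_simp
  linear_combination h3 + 3 * I_sq

theorem norm_aDepol_sq : ‖aDepol‖ ^ 2 = 1 / 2 := by
  have h3 : Real.sqrt 3 ^ 2 = 3 := Real.sq_sqrt (by norm_num)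
  norm_num [EuclideanSpace.norm_sq_eq, Fin.sum_univ_four, aDepol, Matrix.cons_val_two,
    Matrix.cons_val_three, mul_pow, h3]

theorem betaDepol_eq_of_cos_of_sin {p s : ℝ} (hcos : Real.cos s = √(1 - 3 * p / 4))
    (hsin : Real.sin s = √3 * √(p / 4)) :
    betaDepol p = exp (I * s) • aDepol + exp (-(I * s)) • bDepol := by
  ext i
  simp only [PiLp.add_apply, PiLp.smul_apply, smul_eq_mul, bDepol, exp_mul_add_exp_neg_mul_conj,
    re_exp_I_mul_mul]
  fin_cases i <;> simp [betaDepol, aDepol, hcos, hsin, div_re, div_im, normSq] <;> field_simp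

theorem depol_curve_1PR (p : ℝ) (hp : p ∈ Set.Icc (0 : ℝ) 1)
    (s : ℝ) (hs : s ∈ Set.Icc (0 : ℝ) (Real.pi / 2))
    (hsin : Real.sin s = Real.sqrt (3 * p / 4)) :
    betaDepol p = Complex.exp (I * s) • aDepol + Complex.exp (-(I * s)) • bDepol ∧
    ⟪aDepol, bDepol⟫ = 0 ∧
    ‖aDepol‖ ^ 2 + ‖bDepol‖ ^ 2 = 1 := by
  have hcos : Real.cos s = √(1 - 3 * p / 4) :=
    Real.cos_eq_sqrt_one_sub_of_sin_eq_sqrt ⟨by linarith [Real.pi_pos, hs.1], hs.2⟩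
      (by linarith [hp.1]) hsin
  have hsin' : Real.sin s = √3 * √(p / 4) := by
    rw [hsin, ← Real.sqrt_mul (by norm_num)]; ring_nf
  refine ⟨betaDepol_eq_of_cos_of_sin hcos hsin', ?_, ?_⟩
  · rw [bDepol, inner_toLp_conj, sum_aDepol_sq, map_zero]
  · rw [bDepol, norm_toLp_conj, norm_aDepol_sq]; norm_num
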